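/- Let d ≥ 1, let a > 0, and let y ∈ Q_4(0) = [−2,2]^d. Then sup_{x ∈ Q_2(0)} e^{−a|x−y|²} ≤ e^{4ad} · Σ_{n ∈ {−1,0,1}^d} e^{−a|n−y|²}. -/

import Mathlib

/-!
Round `y` coordinatewise to a point `m ∈ {-1,0,1}^d`; since `y ∈ [-2,2]^d` every coordinate moves
by at most `1`, so `|m - y|² ≤ d`. The single term of `m` then already dominates:
`e^{-a|x-y|²} ≤ 1 ≤ e^{ad} e^{-a|m-y|²}`.
-/

lemma exists_mem_neg_one_zero_one_abs_sub_le_one {t : ℝ} (ht : |t| ≤ 2) :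
    ∃ k ∈ ({-1, 0, 1} : Finset ℤ), |(k : ℝ) - t| ≤ 1 := by
  rw [abs_le] at ht
  rcases le_or_gt t (-1) with h | h
  · exact ⟨-1, by simp, by push_cast; rw [abs_le]; constructor <;> linarith⟩
  rcases le_or_gt t 1 with h' | h'
  · exact ⟨0, by simp, by push_cast; rw [abs_le]; constructor <;> linarith⟩
  · exact ⟨1, by simp, by push_cast; rw [abs_le]; constructor <;> linarith⟩

lemma EuclideanSpace.norm_sq_le_card_of_abs_le_one {ι : Type*} [Fintype ι]
    {v : EuclideanSpace ℝ ι} (hv : ∀ i, |v i| ≤ 1) : ‖v‖ ^ 2 ≤ Fintype.card ι := by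
  rw [EuclideanSpace.norm_sq_eq]
  calc ∑ i, ‖v i‖ ^ 2 ≤ ∑ _i : ι, (1 : ℝ) :=
        Finset.sum_le_sum fun i _ => by
          rw [Real.norm_eq_abs]; exact pow_le_one₀ (abs_nonneg _) (hv i)
    _ = Fintype.card ι := by simp

lemma exists_lattice_point_norm_sub_sq_le {d : ℕ} {y : EuclideanSpace ℝ (Fin d)}
    (hy : ∀ i, |y i| ≤ 2) :
    ∃ m ∈ Fintype.piFinset (fun _ : Fin d => ({-1, 0, 1} : Finset ℤ)),
      ‖(WithLp.toLp 2 fun i => (m i : ℝ) : EuclideanSpace ℝ (Fin d)) - y‖ ^ 2 ≤ d := by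
  choose m hm hmy using fun i => exists_mem_neg_one_zero_one_abs_sub_le_one (hy i)
  refine ⟨m, Fintype.mem_piFinset.mpr hm, ?_⟩
  simpa using EuclideanSpace.norm_sq_le_card_of_abs_le_one
    (v := (WithLp.toLp 2 fun i => (m i : ℝ) : EuclideanSpace ℝ (Fin d)) - y) fun i => by simpa using hmy i

theorem lattice_gaussian_bound_inside
    (d : ℕ) (a : ℝ) (ha : 0 < a)
    (y : EuclideanSpace ℝ (Fin d)) (hy : ∀ i, |y i| ≤ 2) :
    ∀ x : EuclideanSpace ℝ (Fin d), (∀ i, |x i| ≤ 1) →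
      Real.exp (-a * ‖x - y‖ ^ 2) ≤
        Real.exp (4 * a * d) *
          ∑ m ∈ Fintype.piFinset (fun _ : Fin d => ({-1, 0, 1} : Finset ℤ)),
            Real.exp (-a * ‖(show EuclideanSpace ℝ (Fin d) from WithLp.toLp 2 fun i => (m i : ℝ)) - y‖ ^ 2) := by
  intro x _
  obtain ⟨m, hm, hmy⟩ := exists_lattice_point_norm_sub_sq_le hy
  calc Real.exp (-a * ‖x - y‖ ^ 2)
      ≤ Real.exp (4 * a * d) *
          Real.exp (-a * ‖(WithLp.toLp 2 fun i => (m i : ℝ) : EuclideanSpace ℝ (Fin d)) - y‖ ^ 2) := by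
        rw [← Real.exp_add, Real.exp_le_exp]
        nlinarith [mul_le_mul_of_nonneg_left hmy ha.le, sq_nonneg ‖x - y‖, Nat.cast_nonneg (α := ℝ) d]
    _ ≤ _ := by
        gcongr
        exact Finset.single_le_sum (f := fun n : Fin d → ℤ => Real.exp (-a *
          ‖(WithLp.toLp 2 fun i => (n i : ℝ) : EuclideanSpace ℝ (Fin d)) - y‖ ^ 2))
          (fun _ _ => Real.exp_nonneg _) hm
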